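/- Let ℓ(t) = 2·log₂(2t + 1). Let n ≥ 1 be an integer and c > 1, λ > 0 be reals. Then n · Σ_{x=0}^∞ min(c·n·e^(−λx), 1) · ( ℓ((x+1)/n) − ℓ(x/n) ) ≤ (4·log₂ n)/λ + 6·c·(2 + 1/λ). -/

import Mathlib

/-!
Write `D x = ℓ((x+1)/n) − ℓ(x/n)`. Since `ℓ` is `(4 / log 2)`-Lipschitz on `[0, ∞)`, every
increment satisfies `0 ≤ D x ≤ 4 / (n log 2)`. Cut the series at `m = ⌈log (c n) / λ⌉`: below `m`
bound the weight by `1`, so the head telescopes to `ℓ(m/n) ≤ 4m / (n log 2)`; from `m` on bound it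
by `c n e^{-λx}`, so the tail is geometric and, as `c n e^{-λm} ≤ 1`, at most
`4 / (n log 2) · (1 − e^{-λ})⁻¹ ≤ 4 / (n log 2) · (1 + 1/λ)`. What is left is
`λ m ≤ log c + log n + λ` together with `log c ≤ c − 1` and `1 / log 2 ≤ 3/2`.
-/

open Finset Real

noncomputable def ell (t : ℝ) : ℝ := 2 * Real.logb 2 (2 * t + 1)

lemma ell_zero : ell 0 = 0 := by simp [ell]

lemma ell_le_ell {s t : ℝ} (hs : 0 < 2 * s + 1) (hst : s ≤ t) : ell s ≤ ell t := by
  unfold ell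
  gcongr
  norm_num

lemma ell_sub_ell_le {s t : ℝ} (hs : 0 ≤ s) (hst : s ≤ t) :
    ell t - ell s ≤ 4 / log 2 * (t - s) := by
  have hs' : 0 < 2 * s + 1 := by linarith
  have ht' : 0 < 2 * t + 1 := by linarith
  have hlog : log (2 * t + 1) - log (2 * s + 1) ≤ 2 * (t - s) :=
    calc log (2 * t + 1) - log (2 * s + 1) = log ((2 * t + 1) / (2 * s + 1)) :=
          (log_div ht'.ne' hs'.ne').symm
      _ ≤ (2 * t + 1) / (2 * s + 1) - 1 := log_le_sub_one_of_pos (by positivity)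
      _ = 2 * (t - s) / (2 * s + 1) := by field_simp; ring
      _ ≤ 2 * (t - s) := div_le_self (by linarith) (by linarith)
  have hlog2 : 0 < log 2 := log_pos one_lt_two
  calc ell t - ell s = 2 * (log (2 * t + 1) - log (2 * s + 1)) / log 2 := by
        unfold ell logb; ring
    _ ≤ 2 * (2 * (t - s)) / log 2 := by gcongr
    _ = 4 / log 2 * (t - s) := by ring

lemma ell_add_one_div_sub_nonneg {a x : ℝ} (ha : 0 < a) (hx : 0 ≤ x) :
    0 ≤ ell ((x + 1) / a) - ell (x / a) :=
  sub_nonneg.2 (ell_le_ell (by positivity) (by gcongr; linarith))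

lemma ell_add_one_div_sub_le {a x : ℝ} (ha : 0 < a) (hx : 0 ≤ x) :
    ell ((x + 1) / a) - ell (x / a) ≤ 4 / log 2 / a :=
  (ell_sub_ell_le (by positivity) (by gcongr; linarith)).trans_eq (by field_simp; ring)

lemma mul_ell_div_le {a t : ℝ} (ha : 0 < a) (ht : 0 ≤ t) : a * ell (t / a) ≤ 4 / log 2 * t := by
  have h := ell_sub_ell_le le_rfl (by positivity : 0 ≤ t / a)
  rw [ell_zero, sub_zero, sub_zero] at h
  calc a * ell (t / a) ≤ a * (4 / log 2 * (t / a)) := by gcongr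
    _ = 4 / log 2 * t := by field_simp

lemma sum_range_ell_succ_div_sub (a : ℝ) (m : ℕ) :
    ∑ x ∈ range m, (ell ((x + 1) / a) - ell (x / a)) = ell (m / a) := by
  simpa [ell_zero] using sum_range_sub (fun x : ℕ => ell (x / a)) m

lemma tsum_min_geometric_mul_le {D : ℕ → ℝ} {K a r : ℝ} (hD0 : ∀ x, 0 ≤ D x)
    (hDK : ∀ x, D x ≤ K) (ha : 0 ≤ a) (hr0 : 0 ≤ r) (hr1 : r < 1) (m : ℕ) :
    ∑' x, min (a * r ^ x) 1 * D x ≤ ∑ x ∈ range m, D x + a * K * r ^ m / (1 - r) := by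
  set f : ℕ → ℝ := fun x => min (a * r ^ x) 1 * D x
  have hf0 : ∀ x, 0 ≤ f x := fun x => mul_nonneg (le_min (by positivity) zero_le_one) (hD0 x)
  have hf_geom : ∀ x, f x ≤ a * K * r ^ x := fun x =>
    calc f x ≤ a * r ^ x * K := mul_le_mul (min_le_left _ _) (hDK x) (hD0 x) (by positivity)
      _ = a * K * r ^ x := by ring
  have hf : Summable f :=
    ((summable_geometric_of_lt_one hr0 hr1).mul_left _).of_nonneg_of_le hf0 hf_geom
  rw [← hf.sum_add_tsum_nat_add m]
  gcongr with x
  · exact mul_le_of_le_one_left (hD0 x) (min_le_right _ _)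
  · calc ∑' i, f (i + m) ≤ ∑' i, a * K * r ^ m * r ^ i :=
          ((summable_nat_add_iff m).2 hf).tsum_le_tsum (fun i => (hf_geom _).trans_eq
            (by ring)) ((summable_geometric_of_lt_one hr0 hr1).mul_left _)
      _ = a * K * r ^ m / (1 - r) := by
          rw [tsum_mul_left, tsum_geometric_of_lt_one hr0 hr1, div_eq_mul_inv]

lemma exists_nat_mul_exp_neg_le_one {a lam : ℝ} (ha : 1 ≤ a) (hlam : 0 < lam) :
    ∃ m : ℕ, a * exp (-lam * m) ≤ 1 ∧ lam * m ≤ log a + lam := by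
  have hu : 0 ≤ log a / lam := div_nonneg (log_nonneg ha) hlam.le
  refine ⟨⌈log a / lam⌉₊, ?_, ?_⟩
  · have h : log a ≤ lam * ⌈log a / lam⌉₊ := (div_le_iff₀' hlam).1 (Nat.le_ceil _)
    calc a * exp (-lam * ⌈log a / lam⌉₊) = exp (log a - lam * ⌈log a / lam⌉₊) := by
          rw [sub_eq_add_neg, exp_add, exp_log (by linarith), neg_mul]
      _ ≤ 1 := exp_le_one_iff.2 (by linarith)
  · have h := Nat.ceil_lt_add_one hu
    rw [div_add_one hlam.ne', lt_div_iff₀' hlam] at h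
    exact h.le

lemma inv_one_sub_exp_neg_le {lam : ℝ} (hlam : 0 < lam) : (1 - exp (-lam))⁻¹ ≤ 1 + 1 / lam := by
  have hlam_le : lam ≤ exp lam - 1 := by linarith [add_one_le_exp lam]
  have hpos : 0 < exp lam - 1 := hlam.trans_le hlam_le
  calc (1 - exp (-lam))⁻¹ = 1 + 1 / (exp lam - 1) := by
        rw [exp_neg]; field_simp; ring
    _ ≤ 1 + 1 / lam := by gcongr

lemma mul_tsum_min_exp_mul_ell_sub_le {a b lam : ℝ} (ha : 0 < a) (hb : 0 ≤ b) (hlam : 0 < lam)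
    {m : ℕ} (hm : b * exp (-lam * m) ≤ 1) :
    a * ∑' x : ℕ, min (b * exp (-lam * x)) 1 * (ell ((x + 1) / a) - ell (x / a))
      ≤ 4 / log 2 * (m + 1 + 1 / lam) := by
  have hexp : ∀ x : ℕ, exp (-lam * x) = exp (-lam) ^ x := fun x => by
    rw [← exp_nat_mul, mul_comm]
  simp only [hexp] at hm ⊢
  have hr1 : exp (-lam) < 1 := exp_lt_one_iff.2 (neg_lt_zero.2 hlam)
  have hsum := tsum_min_geometric_mul_le (a := b)
    (fun x => ell_add_one_div_sub_nonneg ha x.cast_nonneg)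
    (fun x => ell_add_one_div_sub_le ha x.cast_nonneg) hb (exp_pos _).le hr1 m
  rw [sum_range_ell_succ_div_sub] at hsum
  calc a * ∑' x : ℕ, min (b * exp (-lam) ^ x) 1 * (ell ((x + 1) / a) - ell (x / a))
      ≤ a * ell (m / a) + 4 / log 2 * (b * exp (-lam) ^ m) * (1 - exp (-lam))⁻¹ := by
        grw [hsum]
        exact le_of_eq (by field_simp)
    _ ≤ 4 / log 2 * m + 4 / log 2 * 1 * (1 + 1 / lam) := by
        grw [mul_ell_div_le ha m.cast_nonneg, hm, inv_one_sub_exp_neg_le hlam]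
        exact inv_nonneg.2 (sub_nonneg.2 hr1.le)
    _ = 4 / log 2 * (m + 1 + 1 / lam) := by ring

/-- The key series estimate for the gap-encoding part of the
difference run-length scheme under an exponential tail:
`n · ∑_{x=0}^∞ min(c·n·e^{-λx}, 1)·(ℓ((x+1)/n) − ℓ(x/n)) ≤ (4·log₂ n)/λ + 6·c·(2 + 1/λ)`. -/
theorem gap_series_exponential_tail
    (n : ℕ) (hn : 1 ≤ n) (c lam : ℝ) (hc : 1 < c) (hlam : 0 < lam) :
    (n : ℝ) * ∑' x : ℕ,
        min (c * n * Real.exp (-lam * x)) 1 * (ell ((x + 1) / n) - ell (x / n))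
      ≤ 4 * Real.logb 2 n / lam + 6 * c * (2 + 1 / lam) := by
  have hn0 : (0 : ℝ) < n := by exact_mod_cast hn
  have hcn : 1 ≤ c * n := one_le_mul_of_one_le_of_one_le hc.le (by exact_mod_cast hn)
  obtain ⟨m, hm_tail, hm⟩ := exists_nat_mul_exp_neg_le_one hcn hlam
  have hlogc : log c ≤ c - 1 := log_le_sub_one_of_pos (by linarith)
  have hm_le : (m : ℝ) + 1 + 1 / lam ≤ log n / lam + (c / lam + 2) :=
    calc (m : ℝ) + 1 + 1 / lam = (lam * m + 1) / lam + 1 := by field_simp; ring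
      _ ≤ (log c + log n + lam + 1) / lam + 1 := by
          grw [hm, log_mul (by positivity) hn0.ne']
      _ ≤ (c + log n + lam) / lam + 1 := by gcongr ?_ / lam + 1; linarith
      _ = log n / lam + (c / lam + 2) := by field_simp; ring
  have h4 : 4 / log 2 ≤ 6 := by
    rw [div_le_iff₀ (log_pos one_lt_two)]; linarith [log_two_gt_d9]
  calc (n : ℝ) * ∑' x : ℕ, min (c * n * exp (-lam * x)) 1 * (ell ((x + 1) / n) - ell (x / n))
      ≤ 4 / log 2 * (m + 1 + 1 / lam) :=
        mul_tsum_min_exp_mul_ell_sub_le hn0 (by positivity) hlam hm_tail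
    _ ≤ 4 / log 2 * (log n / lam) + 6 * (c / lam + 2) := by
        grw [hm_le]
        rw [mul_add]
        gcongr
    _ = 4 * logb 2 n / lam + 6 * c * (2 + 1 / lam) - 12 * (c - 1) := by
        rw [logb]; ring
    _ ≤ 4 * logb 2 n / lam + 6 * c * (2 + 1 / lam) := by linarith
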